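/- Let n ≥ 2, a ∈ ℝ, ν > 0 and let p_∞(z¹,…,zⁿ) = (4πν)^{−n} exp(−(1/(4ν)) Σᵢ |zⁱ|²) be the Gaussian density on ℝ^{2n}. Then for all z with pairwise distinct components, Σᵢ (Σ_{j≠i} K(zⁱ−zʲ)) · ∇_{zⁱ} p_∞(z) = 0. -/

import Mathlib

open Finset

/-- The Biot and Savart kernel `K(x) = x^⊥ / (2π|x|²)` on `ℝ² \ {0}`. -/
noncomputable def biotSavart (x : EuclideanSpace ℝ (Fin 2)) : EuclideanSpace ℝ (Fin 2) :=
  (2 * Real.pi * ‖x‖ ^ 2)⁻¹ • (WithLp.equiv 2 (Fin 2 → ℝ)).symm ![-(x 1), x 0]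

/-- Configuration space of `n` planar vortices. -/
abbrev Conf (n : ℕ) := Fin n → EuclideanSpace ℝ (Fin 2)

/-- Partial derivative of `f` at `z` in direction `d`. -/
noncomputable def pderiv {n : ℕ} (f : Conf n → ℝ) (d : Conf n) (z : Conf n) : ℝ :=
  fderiv ℝ f z d

/-- Unit direction moving the `k`-th coordinate of the `i`-th particle. -/
noncomputable def dir {n : ℕ} (i : Fin n) (k : Fin 2) : Conf n :=
  Function.update (0 : Conf n) i (EuclideanSpace.single k 1)

/-! Since `∇_{zⁱ} p_∞ = -(zⁱ / (2ν)) p_∞`, the sum is a multiple of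
`∑_{i ≠ j} ⟪K(zⁱ - zʲ), zⁱ⟫`. The kernel is odd and `K(x) ⊥ x`, so the `(i, j)` and `(j, i)` terms
add up to `⟪K(zⁱ - zʲ), zⁱ - zʲ⟫ = 0`. -/

open scoped RealInnerProductSpace

lemma sum_sum_filter_ne_eq_zero_of_antisymm {ι M : Type*} [Fintype ι] [DecidableEq ι]
    [AddCommMonoid M] (f : ι → ι → M) (hf : ∀ i j, i ≠ j → f i j + f j i = 0) :
    ∑ i, ∑ j ∈ univ.filter (· ≠ i), f i j = 0 := by
  rw [← sum_finset_product' univ.offDiag univ _ (by simp [eq_comm])]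
  refine sum_involution (fun p _ => p.swap) (fun p hp => hf p.1 p.2 (mem_offDiag.1 hp).2.2)
    (fun p hp _ h => (mem_offDiag.1 hp).2.2 (Prod.ext_iff.1 h).2) (fun p hp => ?_)
    (fun p _ => p.swap_swap)
  simpa [eq_comm] using hp

lemma inner_biotSavart_self (x : EuclideanSpace ℝ (Fin 2)) : ⟪biotSavart x, x⟫ = 0 := by
  rw [biotSavart, inner_smul_left, PiLp.inner_apply, Fin.sum_univ_two]
  simp only [WithLp.equiv_symm_apply, PiLp.toLp_apply, Matrix.cons_val_zero, Matrix.cons_val_one,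
    inner_neg_left]
  rw [real_inner_comm, neg_add_cancel, mul_zero]

lemma biotSavart_neg (x : EuclideanSpace ℝ (Fin 2)) : biotSavart (-x) = -biotSavart x := by
  ext k
  fin_cases k <;> simp [biotSavart]

lemma inner_biotSavart_sub_add_inner_biotSavart_sub (x y : EuclideanSpace ℝ (Fin 2)) :
    ⟪biotSavart (x - y), x⟫ + ⟪biotSavart (y - x), y⟫ = 0 := by
  rw [← neg_sub x y, biotSavart_neg, inner_neg_left, ← sub_eq_add_neg, ← inner_sub_right,
    inner_biotSavart_self]

section Gaussian

variable {ι E : Type*} [Fintype ι] [NormedAddCommGroup E] [InnerProductSpace ℝ E]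

lemma hasFDerivAt_sum_norm_sq (z : ι → E) :
    HasFDerivAt (fun y : ι → E => ∑ i, ‖y i‖ ^ 2)
      (∑ i, 2 • (innerSL ℝ (z i)).comp (ContinuousLinearMap.proj i)) z :=
  HasFDerivAt.fun_sum fun i _ =>
    (ContinuousLinearMap.proj (R := ℝ) (φ := fun _ : ι => E) i).hasFDerivAt.norm_sq

lemma fderiv_gaussian_apply_single [DecidableEq ι] (C c : ℝ) (z : ι → E) (i : ι) (v : E) :
    fderiv ℝ (fun y : ι → E => C * Real.exp (c * ∑ j, ‖y j‖ ^ 2)) z (Pi.single i v)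
      = 2 * c * (C * Real.exp (c * ∑ j, ‖z j‖ ^ 2)) * ⟪z i, v⟫ := by
  rw [(((hasFDerivAt_sum_norm_sq z).const_mul c).exp.const_mul C).fderiv]
  have hsum : ∑ j, 2 • ⟪z j, (Pi.single i v : ι → E) j⟫ = 2 * ⟪z i, v⟫ := by
    rw [Fintype.sum_eq_single i fun j hj => by
        rw [Pi.single_eq_of_ne hj, inner_zero_right, smul_zero],
      Pi.single_eq_same, two_nsmul, two_mul]
  simp only [smul_apply, _root_.sum_apply, ContinuousLinearMap.comp_apply,
    ContinuousLinearMap.proj_apply, coe_innerSL_apply, smul_eq_mul, hsum]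
  ring

end Gaussian

lemma pderiv_dir_gaussian {n : ℕ} (C c : ℝ) (z : Conf n) (i : Fin n) (k : Fin 2) :
    pderiv (fun y => C * Real.exp (c * ∑ j, ‖y j‖ ^ 2)) (dir i k) z
      = 2 * c * (C * Real.exp (c * ∑ j, ‖z j‖ ^ 2)) * z i k := by
  rw [pderiv, dir, ← Pi.single, fderiv_gaussian_apply_single, EuclideanSpace.inner_single_right]
  simp

theorem biotSavart_grad_gaussian_sum_eq_zero_general (n : ℕ) (ν : ℝ)
    (pinf : Conf n → ℝ)
    (hpinf : pinf = fun y => ((4 * Real.pi * ν) ^ n)⁻¹ *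
      Real.exp (-(1 / (4 * ν)) * ∑ i : Fin n, ‖y i‖ ^ 2))
    (z : Conf n) :
    ∑ i : Fin n, ∑ k : Fin 2,
      (∑ j ∈ univ.filter (· ≠ i), biotSavart (z i - z j) k) * pderiv pinf (dir i k) z
    = 0 := by
  have hgrad (i : Fin n) (k : Fin 2) :
      pderiv pinf (dir i k) z = -(1 / (2 * ν)) * pinf z * z i k := by
    subst hpinf
    rw [pderiv_dir_gaussian]
    ring
  calc _ = -(1 / (2 * ν)) * pinf z *
        ∑ i, ∑ j ∈ univ.filter (· ≠ i), ⟪biotSavart (z i - z j), z i⟫ := by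
        simp only [hgrad, mul_sum, sum_mul, PiLp.inner_apply, RCLike.inner_apply', conj_trivial]
        refine sum_congr rfl fun i _ => ?_
        rw [sum_comm]
        refine sum_congr rfl fun j _ => sum_congr rfl fun k _ => ?_
        ring
    _ = 0 := by
        rw [sum_sum_filter_ne_eq_zero_of_antisymm _ fun i j _ =>
          inner_biotSavart_sub_add_inner_biotSavart_sub (z i) (z j), mul_zero]

/-- For the Gaussian density `p_∞(z) = (4πν)^{-n} exp(-|z|²/(4ν))` on `ℝ^{2n}`,
`∑ᵢ (∑_{j ≠ i} K(zⁱ - zʲ)) · ∇_{zⁱ} p_∞(z) = 0` at every configuration with pairwise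
distinct components. -/
theorem biotSavart_grad_gaussian_sum_eq_zero (n : ℕ) (hn : 2 ≤ n) (a ν : ℝ) (hν : 0 < ν)
    (pinf : Conf n → ℝ)
    (hpinf : pinf = fun y => ((4 * Real.pi * ν) ^ n)⁻¹ *
      Real.exp (-(1 / (4 * ν)) * ∑ i : Fin n, ‖y i‖ ^ 2))
    (z : Conf n) (hz : ∀ i j, i ≠ j → z i ≠ z j) :
    ∑ i : Fin n, ∑ k : Fin 2,
      (∑ j ∈ univ.filter (· ≠ i), biotSavart (z i - z j) k) * pderiv pinf (dir i k) z
    = 0 :=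
  biotSavart_grad_gaussian_sum_eq_zero_general n ν pinf hpinf z
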